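/- arXiv:2107.11720 — 6 statements merged into one kernel-verified Lean document; each statement's English description precedes it below -/
import Mathlib

section
/- Let G be a bounded measurable subset of ℝ² with finite Lebesgue measure |G|. For every smooth (C^∞) function g : ℝ² → ℝ with compact support contained in G, one has ∫_{ℝ²} g(x)² dx ≤ (|G|/2) ∫_{ℝ²} |∇g(x)|² dx, where |∇g|² = |∂g/∂x₁|² + |∂g/∂x₂|². -/
open MeasureTheory

section PoincareAux

open Set

private lemma line_bound_fst (f : ℝ × ℝ → ℝ) (hf : ContDiff ℝ (⊤ : ℕ∞) f)
    (hsupp : HasCompactSupport f) (a b : ℝ) :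
    |f (a, b)| ≤ ∫ t, |fderiv ℝ f (t, b) (1, 0)| := by
  set h : ℝ → ℝ := fun t => f (t, b) with hh_def
  have hcurve : ContDiff ℝ (⊤ : ℕ∞) (fun t : ℝ => ((t, b) : ℝ × ℝ)) :=
    contDiff_id.prodMk contDiff_const
  have hh : ContDiff ℝ 1 h := (hf.comp hcurve).of_le (by simp)
  have hder : ∀ t, HasDerivAt h (fderiv ℝ f (t, b) (1, 0)) t := by
    intro t
    have h1 : HasFDerivAt f (fderiv ℝ f (t, b)) (t, b) :=
      (hf.differentiable (by simp) (t, b)).hasFDerivAt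
    have h2 : HasDerivAt (fun t : ℝ => ((t, b) : ℝ × ℝ)) ((1 : ℝ), (0 : ℝ)) t :=
      (hasDerivAt_id t).prodMk (hasDerivAt_const t b)
    exact h1.comp_hasDerivAt t h2
  have hderiv_eq : deriv h = fun t => fderiv ℝ f (t, b) (1, 0) :=
    funext fun t => (hder t).deriv
  have hcs : HasCompactSupport h := by
    apply HasCompactSupport.intro (hsupp.image continuous_fst)
    intro t ht
    by_contra h0
    exact ht ⟨(t, b), subset_tsupport f h0, rfl⟩
  have hint : Integrable (deriv h) :=
    ((hh.continuous_deriv le_rfl).integrable_of_hasCompactSupport hcs.deriv)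
  have key : f (a, b) = ∫ t in Iic a, deriv h t :=
    (hcs.integral_Iic_deriv_eq hh a).symm
  calc |f (a, b)| = |∫ t in Iic a, deriv h t| := by rw [key]
    _ ≤ ∫ t in Iic a, |deriv h t| := by simpa [Real.norm_eq_abs] using norm_integral_le_integral_norm (μ := volume.restrict (Iic a)) (deriv h)
    _ ≤ ∫ t, |deriv h t| :=
        setIntegral_le_integral hint.abs (Filter.Eventually.of_forall fun t => abs_nonneg _)
    _ = ∫ t, |fderiv ℝ f (t, b) (1, 0)| := by rw [hderiv_eq]

private lemma line_bound_snd (f : ℝ × ℝ → ℝ) (hf : ContDiff ℝ (⊤ : ℕ∞) f)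
    (hsupp : HasCompactSupport f) (a b : ℝ) :
    |f (a, b)| ≤ ∫ s, |fderiv ℝ f (a, s) (0, 1)| := by
  set h : ℝ → ℝ := fun s => f (a, s) with hh_def
  have hcurve : ContDiff ℝ (⊤ : ℕ∞) (fun s : ℝ => ((a, s) : ℝ × ℝ)) :=
    contDiff_const.prodMk contDiff_id
  have hh : ContDiff ℝ 1 h := (hf.comp hcurve).of_le (by simp)
  have hder : ∀ s, HasDerivAt h (fderiv ℝ f (a, s) (0, 1)) s := by
    intro s
    have h1 : HasFDerivAt f (fderiv ℝ f (a, s)) (a, s) :=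
      (hf.differentiable (by simp) (a, s)).hasFDerivAt
    have h2 : HasDerivAt (fun s : ℝ => ((a, s) : ℝ × ℝ)) ((0 : ℝ), (1 : ℝ)) s :=
      (hasDerivAt_const s a).prodMk (hasDerivAt_id s)
    exact h1.comp_hasDerivAt s h2
  have hderiv_eq : deriv h = fun s => fderiv ℝ f (a, s) (0, 1) :=
    funext fun s => (hder s).deriv
  have hcs : HasCompactSupport h := by
    apply HasCompactSupport.intro (hsupp.image continuous_snd)
    intro s hs
    by_contra h0
    exact hs ⟨(a, s), subset_tsupport f h0, rfl⟩
  have hint : Integrable (deriv h) :=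
    ((hh.continuous_deriv le_rfl).integrable_of_hasCompactSupport hcs.deriv)
  have key : f (a, b) = ∫ s in Iic b, deriv h s :=
    (hcs.integral_Iic_deriv_eq hh b).symm
  calc |f (a, b)| = |∫ s in Iic b, deriv h s| := by rw [key]
    _ ≤ ∫ s in Iic b, |deriv h s| := by
        simpa [Real.norm_eq_abs] using
          norm_integral_le_integral_norm (μ := volume.restrict (Iic b)) (deriv h)
    _ ≤ ∫ s, |deriv h s| :=
        setIntegral_le_integral hint.abs (Filter.Eventually.of_forall fun s => abs_nonneg _)
    _ = ∫ s, |fderiv ℝ f (a, s) (0, 1)| := by rw [hderiv_eq]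

private lemma holder_step (S : Set (ℝ × ℝ)) (hS : MeasurableSet S) (hSfin : volume S ≠ ⊤)
    (w : ℝ × ℝ → ℝ) (hw : Continuous w) (hwc : HasCompactSupport w)
    (hwS : ∀ z, z ∉ S → w z = 0) :
    ∫ z, |w z| ≤ Real.sqrt (volume S).toReal * Real.sqrt (∫ z, w z ^ 2) := by
  have hpq : Real.HolderConjugate 2 2 := Real.HolderConjugate.two_two
  have hmem1 : MemLp (S.indicator fun _ => (1 : ℝ)) (ENNReal.ofReal 2) volume :=
    memLp_indicator_const _ hS 1 (Or.inr hSfin)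
  have hmem2 : MemLp (fun z => |w z|) (ENNReal.ofReal 2) volume :=
    (hw.abs).memLp_of_hasCompactSupport hwc.abs
  have key := integral_mul_le_Lp_mul_Lq_of_nonneg hpq
    (Filter.Eventually.of_forall fun z => Set.indicator_nonneg (fun _ _ => zero_le_one) z)
    (Filter.Eventually.of_forall fun z => abs_nonneg (w z)) hmem1 hmem2
  have h1 : ∫ z, S.indicator (fun _ => (1:ℝ)) z * |w z| = ∫ z, |w z| := by
    rw [show (fun z => S.indicator (fun _ => (1:ℝ)) z * |w z|)
        = S.indicator (fun z => |w z|) from ?_, integral_indicator hS]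
    · exact setIntegral_eq_integral_of_forall_compl_eq_zero fun z hz => by rw [hwS z hz, abs_zero]
    · funext z
      by_cases hz : z ∈ S <;> simp [Set.indicator_of_mem, Set.indicator_of_notMem, hz]
  have h2 : ∫ z, S.indicator (fun _ => (1:ℝ)) z ^ (2:ℝ) = (volume S).toReal := by
    rw [show (fun z => S.indicator (fun _ => (1:ℝ)) z ^ (2:ℝ))
        = S.indicator (fun _ => (1:ℝ)) from ?_]
    · rw [integral_indicator_const (1:ℝ) hS]; simp [Measure.real]
    · funext z
      by_cases hz : z ∈ S <;>
        simp [Set.indicator_of_mem, Set.indicator_of_notMem, hz, Real.zero_rpow]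
  have h3 : ∫ z, |w z| ^ (2:ℝ) = ∫ z, w z ^ 2 := by
    congr 1; funext z
    rw [show ((2:ℝ)) = ((2:ℕ):ℝ) by norm_num, Real.rpow_natCast, sq_abs]
  rw [h1, h2, h3] at key
  calc ∫ z, |w z| ≤ (volume S).toReal ^ (1/2:ℝ) * (∫ z, w z ^ 2) ^ (1/2:ℝ) := key
    _ = Real.sqrt (volume S).toReal * Real.sqrt (∫ z, w z ^ 2) := by
        rw [Real.sqrt_eq_rpow, Real.sqrt_eq_rpow]

private lemma poincare_core (S : Set (ℝ × ℝ)) (hS : MeasurableSet S) (hSfin : volume S ≠ ⊤)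
    (f : ℝ × ℝ → ℝ) (hf : ContDiff ℝ (⊤ : ℕ∞) f) (hsupp : HasCompactSupport f)
    (hfS : tsupport f ⊆ S) :
    ∫ z, f z ^ 2 ≤ (volume S).toReal / 2 *
      ∫ z, (fderiv ℝ f z (1, 0)) ^ 2 + (fderiv ℝ f z (0, 1)) ^ 2 := by
  set u : ℝ × ℝ → ℝ := fun z => fderiv ℝ f z (1, 0) with hu_def
  set v : ℝ × ℝ → ℝ := fun z => fderiv ℝ f z (0, 1) with hv_def
  have hfd : Continuous (fderiv ℝ f) := hf.continuous_fderiv (by simp)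
  have hu : Continuous u := hfd.clm_apply continuous_const
  have hv : Continuous v := hfd.clm_apply continuous_const
  have hucs : HasCompactSupport u :=
    (hsupp.fderiv ℝ).comp_left (g := fun (T : ℝ × ℝ →L[ℝ] ℝ) => T (1, 0)) rfl
  have hvcs : HasCompactSupport v :=
    (hsupp.fderiv ℝ).comp_left (g := fun (T : ℝ × ℝ →L[ℝ] ℝ) => T (0, 1)) rfl
  have hintu : Integrable u volume := hu.integrable_of_hasCompactSupport hucs
  have hintv : Integrable v volume := hv.integrable_of_hasCompactSupport hvcs
  have huS : ∀ z, z ∉ S → u z = 0 := by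
    intro z hz
    have : z ∉ Function.support (fderiv ℝ f) :=
      fun hmem => hz (hfS (support_fderiv_subset ℝ hmem))
    simp only [Function.mem_support, not_not] at this
    simp [hu_def, this]
  have hvS : ∀ z, z ∉ S → v z = 0 := by
    intro z hz
    have : z ∉ Function.support (fderiv ℝ f) :=
      fun hmem => hz (hfS (support_fderiv_subset ℝ hmem))
    simp only [Function.mem_support, not_not] at this
    simp [hv_def, this]
  set F : ℝ → ℝ := fun b => ∫ t, |u (t, b)| with hF_def
  set H : ℝ → ℝ := fun a => ∫ s, |v (a, s)| with hH_def
  have hFnonneg : ∀ b, 0 ≤ F b := fun b => integral_nonneg fun t => abs_nonneg _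
  have hHnonneg : ∀ a, 0 ≤ H a := fun a => integral_nonneg fun s => abs_nonneg _
  have hintu' : Integrable u (volume.prod volume) := by rwa [← Measure.volume_eq_prod ℝ ℝ]
  have hintv' : Integrable v (volume.prod volume) := by rwa [← Measure.volume_eq_prod ℝ ℝ]
  have hintH : Integrable H volume := hintv'.abs.integral_prod_left
  have hintF : Integrable F volume := hintu'.abs.swap.integral_prod_left
  have hptwise : ∀ z : ℝ × ℝ, f z ^ 2 ≤ H z.1 * F z.2 := by
    intro z
    have h1 : |f z| ≤ F z.2 := by
      simpa using line_bound_fst f hf hsupp z.1 z.2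
    have h2 : |f z| ≤ H z.1 := by
      simpa using line_bound_snd f hf hsupp z.1 z.2
    calc f z ^ 2 = |f z| * |f z| := by rw [← sq_abs]; ring
      _ ≤ H z.1 * F z.2 := mul_le_mul h2 h1 (abs_nonneg _) (le_trans (abs_nonneg _) h2)
  have hintf2 : Integrable (fun z => f z ^ 2) volume :=
    (hf.continuous.pow 2).integrable_of_hasCompactSupport
      (hsupp.comp_left (g := fun x : ℝ => x ^ 2) (by simp) : HasCompactSupport fun z => f z ^ 2)
  have hintHF : Integrable (fun z : ℝ × ℝ => H z.1 * F z.2) volume := by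
    rw [Measure.volume_eq_prod ℝ ℝ]; exact hintH.mul_prod hintF
  have step1 : ∫ z, f z ^ 2 ≤ ∫ z : ℝ × ℝ, H z.1 * F z.2 :=
    integral_mono hintf2 hintHF hptwise
  have step2 : ∫ z : ℝ × ℝ, H z.1 * F z.2 = (∫ a, H a) * (∫ b, F b) := by
    rw [Measure.volume_eq_prod ℝ ℝ, integral_prod_mul]
  have hintH_eq : ∫ a, H a = ∫ z, |v z| := by
    rw [hH_def]
    rw [show (∫ z, |v z|) = ∫ z, |v z| ∂(volume.prod volume) by rw [← Measure.volume_eq_prod ℝ ℝ]]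
    exact integral_integral hintv'.abs
  have hintF_eq : ∫ b, F b = ∫ z, |u z| := by
    rw [hF_def]
    have hswap : Integrable (Function.uncurry fun b t => |u (t, b)|) (volume.prod volume) :=
      hintu'.abs.swap
    rw [integral_integral_swap hswap]
    rw [show (∫ z, |u z|) = ∫ z, |u z| ∂(volume.prod volume) by rw [← Measure.volume_eq_prod ℝ ℝ]]
    exact integral_integral hintu'.abs
  set M := (volume S).toReal with hM
  have hMnonneg : 0 ≤ M := ENNReal.toReal_nonneg
  set A := ∫ z, u z ^ 2 with hA
  set B := ∫ z, v z ^ 2 with hB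
  have hAnonneg : 0 ≤ A := integral_nonneg fun z => sq_nonneg _
  have hBnonneg : 0 ≤ B := integral_nonneg fun z => sq_nonneg _
  have hHolderU : ∫ z, |u z| ≤ Real.sqrt M * Real.sqrt A :=
    holder_step S hS hSfin u hu hucs huS
  have hHolderV : ∫ z, |v z| ≤ Real.sqrt M * Real.sqrt B :=
    holder_step S hS hSfin v hv hvcs hvS
  have hintu2 : Integrable (fun z => u z ^ 2) volume :=
    (hu.pow 2).integrable_of_hasCompactSupport
      (hucs.comp_left (g := fun x : ℝ => x ^ 2) (by simp) : HasCompactSupport fun z => u z ^ 2)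
  have hintv2 : Integrable (fun z => v z ^ 2) volume :=
    (hv.pow 2).integrable_of_hasCompactSupport
      (hvcs.comp_left (g := fun x : ℝ => x ^ 2) (by simp) : HasCompactSupport fun z => v z ^ 2)
  have hfinal : ∫ z, u z ^ 2 + v z ^ 2 = A + B := integral_add hintu2 hintv2
  calc ∫ z, f z ^ 2 ≤ (∫ a, H a) * (∫ b, F b) := step1.trans_eq step2
    _ = (∫ z, |v z|) * (∫ z, |u z|) := by rw [hintH_eq, hintF_eq]
    _ ≤ (Real.sqrt M * Real.sqrt B) * (Real.sqrt M * Real.sqrt A) := by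
        apply mul_le_mul hHolderV hHolderU (integral_nonneg fun z => abs_nonneg _)
        positivity
    _ = M * (Real.sqrt B * Real.sqrt A) := by
        rw [show (Real.sqrt M * Real.sqrt B) * (Real.sqrt M * Real.sqrt A)
          = (Real.sqrt M * Real.sqrt M) * (Real.sqrt B * Real.sqrt A) by ring,
          Real.mul_self_sqrt hMnonneg]
    _ ≤ M * ((A + B) / 2) := by
        apply mul_le_mul_of_nonneg_left _ hMnonneg
        nlinarith [Real.sq_sqrt hAnonneg, Real.sq_sqrt hBnonneg,
          sq_nonneg (Real.sqrt A - Real.sqrt B), Real.sqrt_nonneg A, Real.sqrt_nonneg B]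
    _ = M / 2 * ∫ z, u z ^ 2 + v z ^ 2 := by rw [hfinal]; ring

end PoincareAux

open Set in
/-- **Poincaré inequality** on a bounded measurable set `G ⊆ ℝ²`:
for every smooth compactly supported `g : ℝ² → ℝ` with support contained in `G`,
`∫ g² ≤ (|G|/2) ∫ |∇g|²`. -/
theorem poincare_inequality_planar
    (G : Set (EuclideanSpace ℝ (Fin 2)))
    (hGmeas : MeasurableSet G) (hGbdd : Bornology.IsBounded G)
    (g : EuclideanSpace ℝ (Fin 2) → ℝ)
    (hg : ContDiff ℝ (⊤ : ℕ∞) g) (hgsupp : HasCompactSupport g)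
    (hgG : tsupport g ⊆ G) :
    ∫ x, (g x) ^ 2 ≤
      (volume G).toReal / 2 *
        ∫ x, ∑ j : Fin 2, (fderiv ℝ g x (EuclideanSpace.single j 1)) ^ 2 := by
  set L : EuclideanSpace ℝ (Fin 2) ≃L[ℝ] ℝ × ℝ :=
    (EuclideanSpace.equiv (Fin 2) ℝ).trans (ContinuousLinearEquiv.finTwoArrow ℝ ℝ) with hL_def
  have hLmp : MeasurePreserving (⇑L) volume volume :=
    (volume_preserving_finTwoArrow ℝ).comp
      (EuclideanSpace.volume_preserving_symm_measurableEquiv_toLp (Fin 2))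
  have hLsymmmp : MeasurePreserving (⇑L.symm) volume volume :=
    ((EuclideanSpace.volume_preserving_symm_measurableEquiv_toLp (Fin 2)).symm).comp
      (volume_preserving_finTwoArrow ℝ).symm
  set S : Set (ℝ × ℝ) := ⇑L.symm ⁻¹' G with hS_def
  have hSmeas : MeasurableSet S := hGmeas.preimage L.symm.continuous.measurable
  have hSvol : volume S = volume G := hLsymmmp.measure_preimage hGmeas.nullMeasurableSet
  have hSfin : volume S ≠ ⊤ := by
    rw [hSvol]
    exact hGbdd.measure_lt_top.ne
  set f : ℝ × ℝ → ℝ := g ∘ ⇑L.symm with hf_def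
  have hf : ContDiff ℝ (⊤ : ℕ∞) f := hg.comp L.symm.contDiff
  have hfc : HasCompactSupport f := hgsupp.comp_homeomorph L.symm.toHomeomorph
  have hfS : tsupport f ⊆ S := by
    refine Subset.trans (closure_minimal ?_
      ((isClosed_tsupport g).preimage L.symm.continuous)) (preimage_mono hgG)
    intro z hz
    exact subset_tsupport g hz
  have hcomp : ∀ x, f (L x) = g x := fun x => by simp [hf_def]
  have hfderiv : ∀ x, fderiv ℝ f (L x) =
      (fderiv ℝ g x).comp (L.symm : ℝ × ℝ →L[ℝ] EuclideanSpace ℝ (Fin 2)) := by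
    intro x
    have h1 : HasFDerivAt g (fderiv ℝ g x) (⇑L.symm (L x)) := by
      rw [L.symm_apply_apply]
      exact (hg.differentiable (by simp) x).hasFDerivAt
    have h2 : HasFDerivAt (⇑L.symm)
        (L.symm : ℝ × ℝ →L[ℝ] EuclideanSpace ℝ (Fin 2)) (L x) := L.symm.hasFDerivAt
    exact (h1.comp (L x) h2).fderiv
  have he0 : (⇑L.symm (1, 0) : EuclideanSpace ℝ (Fin 2)) = EuclideanSpace.single 0 1 := by
    rw [ContinuousLinearEquiv.symm_apply_eq]
    simp only [hL_def, ContinuousLinearEquiv.trans_apply]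
    rw [show ((EuclideanSpace.equiv (Fin 2) ℝ) (EuclideanSpace.single 0 1)) = Pi.single 0 1 from rfl]
    exact Prod.ext (by simp) (by simp)
  have he1 : (⇑L.symm (0, 1) : EuclideanSpace ℝ (Fin 2)) = EuclideanSpace.single 1 1 := by
    rw [ContinuousLinearEquiv.symm_apply_eq]
    simp only [hL_def, ContinuousLinearEquiv.trans_apply]
    rw [show ((EuclideanSpace.equiv (Fin 2) ℝ) (EuclideanSpace.single 1 1)) = Pi.single 1 1 from rfl]
    exact Prod.ext (by simp) (by simp)
  have hMEmb : MeasurableEmbedding (⇑L) := L.toHomeomorph.measurableEmbedding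
  have key := poincare_core S hSmeas hSfin f hf hfc hfS
  have hLHS : ∫ z, f z ^ 2 = ∫ x, g x ^ 2 := by
    rw [← hLmp.integral_comp hMEmb (fun z => f z ^ 2)]
    refine integral_congr_ae (Filter.Eventually.of_forall fun x => ?_)
    show f (L x) ^ 2 = g x ^ 2
    rw [hcomp x]
  have hRHS : (∫ z, (fderiv ℝ f z (1, 0)) ^ 2 + (fderiv ℝ f z (0, 1)) ^ 2)
      = ∫ x, ∑ j : Fin 2, (fderiv ℝ g x (EuclideanSpace.single j 1)) ^ 2 := by
    rw [← hLmp.integral_comp hMEmb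
      (fun z => (fderiv ℝ f z (1, 0)) ^ 2 + (fderiv ℝ f z (0, 1)) ^ 2)]
    apply integral_congr_ae
    apply Filter.Eventually.of_forall
    intro x
    show (fderiv ℝ f (L x)) (1, 0) ^ 2 + (fderiv ℝ f (L x)) (0, 1) ^ 2
      = ∑ j : Fin 2, (fderiv ℝ g x (EuclideanSpace.single j 1)) ^ 2
    rw [hfderiv x]
    simp only [ContinuousLinearMap.comp_apply, ContinuousLinearEquiv.coe_coe,
      Fin.sum_univ_two, he0, he1]
  rw [← hLHS, ← hRHS, ← hSvol]
  exact key
end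

section
/- Under the Gauss quadrature hypotheses, the pseudo-spectral approximation interpolates the sampled values: for every j = 1, …, N+1, u^{(N)}(ξ_j) = u(ξ_j). -/
open MeasureTheory

universe u

/-- `c(k) = ∫ P_k² dμ`. -/
noncomputable def cCoeff {n : ℕ} (μ : Measure ℝ) (P : Fin n → Polynomial ℝ)
    (k : Fin n) : ℝ :=
  ∫ x, ((P k).eval x) ^ 2 ∂μ

/-- The exact chaos coefficient `u_k = ∫ u(ξ) P_k(ξ) μ(dξ)`. -/
noncomputable def chaosCoeff {n : ℕ} {H : Type u} [NormedAddCommGroup H]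
    [InnerProductSpace ℝ H] [CompleteSpace H]
    (μ : Measure ℝ) (P : Fin n → Polynomial ℝ) (u : ℝ → H) (k : Fin n) : H :=
  ∫ x, (P k).eval x • u x ∂μ

/-- The truncated chaos expansion `u^N(t) = Σ_k (u_k / c(k)) P_k(t)`. -/
noncomputable def truncExp {n : ℕ} {H : Type u} [NormedAddCommGroup H]
    [InnerProductSpace ℝ H] [CompleteSpace H]
    (μ : Measure ℝ) (P : Fin n → Polynomial ℝ) (u : ℝ → H) (t : ℝ) : H :=
  ∑ k : Fin n, ((cCoeff μ P k)⁻¹ * (P k).eval t) • chaosCoeff μ P u k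

/-- The Gauss-quadrature coefficient `u_k^{(N)} = Σ_j w_j P_k(ξ_j) u(ξ_j)`. -/
noncomputable def quadCoeff {n : ℕ} {H : Type u} [NormedAddCommGroup H]
    [InnerProductSpace ℝ H] [CompleteSpace H]
    (P : Fin n → Polynomial ℝ) (ξ w : Fin n → ℝ) (u : ℝ → H) (k : Fin n) : H :=
  ∑ j : Fin n, (w j * (P k).eval (ξ j)) • u (ξ j)

/-- The pseudo-spectral approximation `u^{(N)}(t) = Σ_k (u_k^{(N)} / c(k)) P_k(t)`. -/
noncomputable def pseudoSpec {n : ℕ} {H : Type u} [NormedAddCommGroup H]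
    [InnerProductSpace ℝ H] [CompleteSpace H]
    (μ : Measure ℝ) (P : Fin n → Polynomial ℝ) (ξ w : Fin n → ℝ)
    (u : ℝ → H) (t : ℝ) : H :=
  ∑ k : Fin n, ((cCoeff μ P k)⁻¹ * (P k).eval t) • quadCoeff P ξ w u k

/-! With `A_{kj} = P_k(ξ_j)`, `W = diag w` and `C = diag c`, exactness of the quadrature on the
products `P_k P_m` (degree `≤ 2N`) is the discrete orthogonality `A W Aᵀ = C`. Hence `C⁻¹ A W` is a
right, and so a left, inverse of the square matrix `Aᵀ`: `Aᵀ C⁻¹ A W = 1`. Its `(i, j)` entry is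
exactly the coefficient of `u(ξ_j)` in `u^{(N)}(ξ_i)`. -/

section

open Matrix

def nodeMatrix {n : ℕ} (P : Fin n → Polynomial ℝ) (ξ : Fin n → ℝ) : Matrix (Fin n) (Fin n) ℝ :=
  Matrix.of fun k j => (P k).eval (ξ j)

theorem Matrix.transpose_mul_diagonal_inv_mul_mul_diagonal_eq_one {ι K : Type*} [Fintype ι]
    [DecidableEq ι] [Field K] (A : Matrix ι ι K) (w c : ι → K) (hc : ∀ k, c k ≠ 0)
    (h : A * diagonal w * Aᵀ = diagonal c) :
    Aᵀ * diagonal c⁻¹ * A * diagonal w = 1 := by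
  have hright : (diagonal c⁻¹ * A * diagonal w) * Aᵀ = 1 := by
    rw [Matrix.mul_assoc, Matrix.mul_assoc, ← Matrix.mul_assoc A, h, diagonal_mul_diagonal,
      ← diagonal_one]
    exact congrArg diagonal (funext fun k => inv_mul_cancel₀ (hc k))
  simpa only [Matrix.mul_assoc] using mul_eq_one_comm.mp hright

theorem nodeMatrix_mul_diagonal_mul_transpose (μ : Measure ℝ) (N : ℕ)
    (P : Fin (N + 1) → Polynomial ℝ) (hdeg : ∀ k, (P k).natDegree ≤ N)
    (horth : ∀ k m : Fin (N + 1), k ≠ m → ∫ x, (P k).eval x * (P m).eval x ∂μ = 0)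
    (ξ w : Fin (N + 1) → ℝ)
    (hquad : ∀ h : Polynomial ℝ, h.natDegree ≤ 2 * N + 1 →
      ∫ x, h.eval x ∂μ = ∑ j : Fin (N + 1), w j * h.eval (ξ j)) :
    nodeMatrix P ξ * diagonal w * (nodeMatrix P ξ)ᵀ = diagonal (cCoeff μ P) := by
  ext k m
  have hprod : (P k * P m).natDegree ≤ 2 * N + 1 := by
    have := Polynomial.natDegree_mul_le (p := P k) (q := P m)
    have := hdeg k
    have := hdeg m
    omega
  have hsum : ∑ j, nodeMatrix P ξ k j * w j * nodeMatrix P ξ m j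
      = ∫ x, (P k).eval x * (P m).eval x ∂μ := by
    have hexact := hquad _ hprod
    simp only [Polynomial.eval_mul] at hexact
    rw [hexact]
    exact Finset.sum_congr rfl fun j _ => by simp only [nodeMatrix, of_apply]; ring
  rw [mul_apply]
  simp only [mul_diagonal, transpose_apply, hsum, diagonal_apply]
  split_ifs with hkm
  · simp [hkm, cCoeff, sq]
  · exact horth k m hkm

theorem pseudoSpec_eq_sum_smul {n : ℕ} {H : Type u} [NormedAddCommGroup H]
    [InnerProductSpace ℝ H] [CompleteSpace H]
    (μ : Measure ℝ) (P : Fin n → Polynomial ℝ) (ξ w : Fin n → ℝ) (u : ℝ → H) (i : Fin n) :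
    pseudoSpec μ P ξ w u (ξ i) = ∑ j, ((nodeMatrix P ξ)ᵀ * diagonal (cCoeff μ P)⁻¹
      * nodeMatrix P ξ * diagonal w) i j • u (ξ j) := by
  simp only [mul_diagonal, Matrix.mul_assoc]
  simp only [mul_apply (M := (nodeMatrix P ξ)ᵀ), diagonal_mul, transpose_apply, Pi.inv_apply,
    Finset.sum_mul, Finset.sum_smul]
  simp only [pseudoSpec, quadCoeff, Finset.smul_sum, smul_smul, nodeMatrix, of_apply]
  rw [Finset.sum_comm]
  exact Finset.sum_congr rfl fun j _ => Finset.sum_congr rfl fun k _ => by congr 1; ring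

end

theorem pseudoSpec_interpolates_general
    (μ : Measure ℝ) (N : ℕ)
    (P : Fin (N + 1) → Polynomial ℝ)
    (hdeg : ∀ k : Fin (N + 1), (P k).natDegree = (k : ℕ))
    (horth : ∀ k m : Fin (N + 1), k ≠ m →
      ∫ x, (P k).eval x * (P m).eval x ∂μ = 0)
    (hpos : ∀ k : Fin (N + 1), 0 < cCoeff μ P k)
    (ξ : Fin (N + 1) → ℝ) (w : Fin (N + 1) → ℝ)
    (hquad : ∀ h : Polynomial ℝ, h.natDegree ≤ 2 * N + 1 →
      ∫ x, h.eval x ∂μ = ∑ j : Fin (N + 1), w j * h.eval (ξ j))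
    (H : Type u) [NormedAddCommGroup H] [InnerProductSpace ℝ H] [CompleteSpace H]
    (u : ℝ → H) :
    ∀ j : Fin (N + 1), pseudoSpec μ P ξ w u (ξ j) = u (ξ j) := by
  intro i
  have hdual := Matrix.transpose_mul_diagonal_inv_mul_mul_diagonal_eq_one (nodeMatrix P ξ) w
    (cCoeff μ P) (fun k => (hpos k).ne')
    (nodeMatrix_mul_diagonal_mul_transpose μ N P (fun k => (hdeg k).trans_le k.is_le) horth ξ w
      hquad)
  rw [pseudoSpec_eq_sum_smul, hdual]
  simp [Matrix.one_apply]

/-- The pseudo-spectral approximation interpolates the sampled values: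
`u^{(N)}(ξ_j) = u(ξ_j)` for every quadrature node `ξ_j`. -/
theorem pseudoSpec_interpolates
    (μ : Measure ℝ) [IsProbabilityMeasure μ] (N : ℕ) (hN : 1 ≤ N)
    (P : Fin (N + 1) → Polynomial ℝ)
    (hdeg : ∀ k : Fin (N + 1), (P k).natDegree = (k : ℕ))
    (hint : ∀ p : Polynomial ℝ, Integrable (fun x => p.eval x) μ)
    (horth : ∀ k m : Fin (N + 1), k ≠ m →
      ∫ x, (P k).eval x * (P m).eval x ∂μ = 0)
    (hpos : ∀ k : Fin (N + 1), 0 < cCoeff μ P k)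
    (ξ : Fin (N + 1) → ℝ) (w : Fin (N + 1) → ℝ)
    (hw : ∀ j, 0 < w j)
    (hquad : ∀ h : Polynomial ℝ, h.natDegree ≤ 2 * N + 1 →
      ∫ x, h.eval x ∂μ = ∑ j : Fin (N + 1), w j * h.eval (ξ j))
    (H : Type u) [NormedAddCommGroup H] [InnerProductSpace ℝ H] [CompleteSpace H]
    (u : ℝ → H) (hmeas : StronglyMeasurable u)
    (C : ℝ) (hbdd : ∀ x, ‖u x‖ ≤ C) :
    ∀ j : Fin (N + 1), pseudoSpec μ P ξ w u (ξ j) = u (ξ j) :=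
  pseudoSpec_interpolates_general μ N P hdeg horth hpos ξ w hquad H u
end

section
/- Under the Gauss quadrature hypotheses, suppose δ ≥ 0 is such that ‖u(ξ_j) − u^N(ξ_j)‖_H ≤ δ for every j = 1, …, N+1. Then for every k = 0, …, N, the coefficient error satisfies ‖u_k − u_k^{(N)}‖_H² ≤ δ² · c(k). -/
/-!
Since the quadrature rule is exact on the products `P_k P_m` (degree `≤ 2N`), orthogonality makes
it reproduce the coefficients of the truncated expansion exactly: `u_k = Σ_j w_j P_k(ξ_j) u^N(ξ_j)`.
Hence `u_k − u_k^{(N)} = Σ_j w_j P_k(ξ_j) (u^N(ξ_j) − u(ξ_j))`, whose norm is at most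
`δ Σ_j w_j |P_k(ξ_j)|`, and by Cauchy–Schwarz its square is at most
`δ² (Σ_j w_j) (Σ_j w_j P_k(ξ_j)²) = δ² · 1 · c(k)`, again by exactness of the rule.
-/

open MeasureTheory

universe u

section QuadCoeff

variable {n : ℕ} {H : Type*} [NormedAddCommGroup H] [InnerProductSpace ℝ H] [CompleteSpace H]
  (P : Fin n → Polynomial ℝ) (ξ w : Fin n → ℝ)

theorem quadCoeff_sub (u v : ℝ → H) (k : Fin n) :
    quadCoeff P ξ w u k - quadCoeff P ξ w v k = quadCoeff P ξ w (u - v) k := by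
  simp only [quadCoeff, ← Finset.sum_sub_distrib, Pi.sub_apply, smul_sub]

variable {P ξ w}

theorem norm_quadCoeff_le {v : ℝ → H} {δ : ℝ} (hw : ∀ j, 0 ≤ w j)
    (hv : ∀ j, ‖v (ξ j)‖ ≤ δ) (k : Fin n) :
    ‖quadCoeff P ξ w v k‖ ≤ δ * ∑ j, w j * |(P k).eval (ξ j)| := by
  rw [Finset.mul_sum]
  refine (norm_sum_le _ _).trans (Finset.sum_le_sum fun j _ => ?_)
  rw [norm_smul, Real.norm_eq_abs, abs_mul, abs_of_nonneg (hw j), mul_comm δ]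
  exact mul_le_mul_of_nonneg_left (hv j) (mul_nonneg (hw j) (abs_nonneg _))

theorem sq_norm_quadCoeff_le {v : ℝ → H} {δ : ℝ} (hw : ∀ j, 0 ≤ w j)
    (hv : ∀ j, ‖v (ξ j)‖ ≤ δ) (k : Fin n) :
    ‖quadCoeff P ξ w v k‖ ^ 2 ≤ δ ^ 2 * ((∑ j, w j) * ∑ j, w j * (P k).eval (ξ j) ^ 2) := by
  have cauchySchwarz : (∑ j, w j * |(P k).eval (ξ j)|) ^ 2 ≤
      (∑ j, w j) * ∑ j, w j * (P k).eval (ξ j) ^ 2 :=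
    Finset.sum_sq_le_sum_mul_sum_of_sq_le_mul _ (fun j _ => hw j)
      (fun j _ => mul_nonneg (hw j) (sq_nonneg _)) 
      (fun j _ => (by rw [mul_pow, sq_abs]; ring : _ = _).le)
  calc ‖quadCoeff P ξ w v k‖ ^ 2 ≤ (δ * ∑ j, w j * |(P k).eval (ξ j)|) ^ 2 :=
        pow_le_pow_left₀ (norm_nonneg _) (norm_quadCoeff_le hw hv k) 2
    _ ≤ δ ^ 2 * ((∑ j, w j) * ∑ j, w j * (P k).eval (ξ j) ^ 2) := by
        rw [mul_pow]; gcongr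

variable (μ : Measure ℝ) (u : ℝ → H)

theorem quadCoeff_truncExp (k : Fin n) :
    quadCoeff P ξ w (truncExp μ P u) k =
      ∑ m, ((cCoeff μ P m)⁻¹ * ∑ j, w j * ((P k).eval (ξ j) * (P m).eval (ξ j))) •
        chaosCoeff μ P u m := by
  simp only [quadCoeff, truncExp, Finset.smul_sum, smul_smul]
  rw [Finset.sum_comm]
  refine Finset.sum_congr rfl fun m _ => ?_
  rw [← Finset.sum_smul, Finset.mul_sum]
  exact congrArg (· • _) (Finset.sum_congr rfl fun j _ => by ring)

theorem quadCoeff_truncExp_eq_chaosCoeff {k : Fin n}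
    (hexact : ∀ m, ∑ j, w j * ((P k).eval (ξ j) * (P m).eval (ξ j)) =
      ∫ x, (P k).eval x * (P m).eval x ∂μ)
    (horth : ∀ m, m ≠ k → ∫ x, (P k).eval x * (P m).eval x ∂μ = 0)
    (hck : cCoeff μ P k ≠ 0) :
    quadCoeff P ξ w (truncExp μ P u) k = chaosCoeff μ P u k := by
  rw [quadCoeff_truncExp, Finset.sum_eq_single k]
  · have hsq : ∫ x, (P k).eval x * (P k).eval x ∂μ = cCoeff μ P k := by simp only [cCoeff, sq]
    rw [hexact, hsq, inv_mul_cancel₀ hck, one_smul]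
  · intro m _ hmk
    rw [hexact, horth m hmk, mul_zero, zero_smul]
  · exact fun hk => (hk (Finset.mem_univ k)).elim

end QuadCoeff

theorem quadCoeff_error_bound_general
    (μ : Measure ℝ) [IsProbabilityMeasure μ] (N : ℕ)
    (P : Fin (N + 1) → Polynomial ℝ)
    (hdeg : ∀ k : Fin (N + 1), (P k).natDegree = (k : ℕ))
    (horth : ∀ k m : Fin (N + 1), k ≠ m →
      ∫ x, (P k).eval x * (P m).eval x ∂μ = 0)
    (hpos : ∀ k : Fin (N + 1), 0 < cCoeff μ P k)
    (ξ : Fin (N + 1) → ℝ) (w : Fin (N + 1) → ℝ)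
    (hw : ∀ j, 0 < w j)
    (hquad : ∀ h : Polynomial ℝ, h.natDegree ≤ 2 * N + 1 →
      ∫ x, h.eval x ∂μ = ∑ j : Fin (N + 1), w j * h.eval (ξ j))
    (H : Type u) [NormedAddCommGroup H] [InnerProductSpace ℝ H] [CompleteSpace H]
    (u : ℝ → H)
    (δ : ℝ)
    (happrox : ∀ j : Fin (N + 1), ‖u (ξ j) - truncExp μ P u (ξ j)‖ ≤ δ) :
    ∀ k : Fin (N + 1),
      ‖chaosCoeff μ P u k - quadCoeff P ξ w u k‖ ^ 2 ≤ δ ^ 2 * cCoeff μ P k := by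
  intro k
  have hexact : ∀ m, ∑ j, w j * ((P k).eval (ξ j) * (P m).eval (ξ j)) =
      ∫ x, (P k).eval x * (P m).eval x ∂μ := fun m => by
    have hdeg_mul : (P k * P m).natDegree ≤ 2 * N + 1 := by
      refine Polynomial.natDegree_mul_le.trans ?_
      rw [hdeg k, hdeg m]
      omega
    simpa only [Polynomial.eval_mul] using (hquad _ hdeg_mul).symm
  have hmass : ∑ j, w j = 1 := by simpa using (hquad 1 (by simp)).symm
  have hck : ∑ j, w j * (P k).eval (ξ j) ^ 2 = cCoeff μ P k := by
    simpa only [cCoeff, sq] using hexact k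
  rw [← quadCoeff_truncExp_eq_chaosCoeff μ u hexact (fun m hm => horth k m hm.symm)
    (hpos k).ne', quadCoeff_sub]
  have hnodes : ∀ j, ‖(truncExp μ P u - u) (ξ j)‖ ≤ δ := fun j => by
    rw [Pi.sub_apply, norm_sub_rev]
    exact happrox j
  calc _ ≤ δ ^ 2 * ((∑ j, w j) * ∑ j, w j * (P k).eval (ξ j) ^ 2) :=
        sq_norm_quadCoeff_le (fun j => (hw j).le) hnodes k
    _ = δ ^ 2 * cCoeff μ P k := by rw [hmass, hck, one_mul]

/-- Coefficient error bound for the pseudo-spectral (discrete projection)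
approximation: `‖u_k − u_k^{(N)}‖² ≤ δ²·c(k)`. -/
theorem quadCoeff_error_bound
    (μ : Measure ℝ) [IsProbabilityMeasure μ] (N : ℕ) (hN : 1 ≤ N)
    (P : Fin (N + 1) → Polynomial ℝ)
    (hdeg : ∀ k : Fin (N + 1), (P k).natDegree = (k : ℕ))
    (hint : ∀ p : Polynomial ℝ, Integrable (fun x => p.eval x) μ)
    (horth : ∀ k m : Fin (N + 1), k ≠ m →
      ∫ x, (P k).eval x * (P m).eval x ∂μ = 0)
    (hpos : ∀ k : Fin (N + 1), 0 < cCoeff μ P k)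
    (ξ : Fin (N + 1) → ℝ) (w : Fin (N + 1) → ℝ)
    (hw : ∀ j, 0 < w j)
    (hquad : ∀ h : Polynomial ℝ, h.natDegree ≤ 2 * N + 1 →
      ∫ x, h.eval x ∂μ = ∑ j : Fin (N + 1), w j * h.eval (ξ j))
    (H : Type u) [NormedAddCommGroup H] [InnerProductSpace ℝ H] [CompleteSpace H]
    (u : ℝ → H) (hmeas : StronglyMeasurable u)
    (C : ℝ) (hbdd : ∀ x, ‖u x‖ ≤ C)
    (δ : ℝ) (hδ : 0 ≤ δ)
    (happrox : ∀ j : Fin (N + 1), ‖u (ξ j) - truncExp μ P u (ξ j)‖ ≤ δ) :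
    ∀ k : Fin (N + 1),
      ‖chaosCoeff μ P u k - quadCoeff P ξ w u k‖ ^ 2 ≤ δ ^ 2 * cCoeff μ P k :=
  quadCoeff_error_bound_general μ N P hdeg horth hpos ξ w hw hquad H u δ happrox
end

section
/- Under the Gauss quadrature hypotheses, suppose δ ≥ 0 is such that ‖u(ξ_j) − u^N(ξ_j)‖_H ≤ δ for every j = 1, …, N+1 and also ‖u(ξ) − u^N(ξ)‖_H ≤ δ for μ-almost every ξ. Then the pseudo-spectral approximation satisfies the error bound ∫_ℝ ‖u(ξ) − u^{(N)}(ξ)‖_H² μ(dξ) ≤ ∫_ℝ ‖u(ξ) − u^N(ξ)‖_H² μ(dξ) + N·δ², and in particular ∫_ℝ ‖u(ξ) − u^{(N)}(ξ)‖_H² μ(dξ) ≤ (N+1)·δ². -/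
open MeasureTheory

universe u

/-!
The residual `u - u^N` is `L²(μ)`-orthogonal to every `P_k`, so for any coefficients `b`,
Pythagoras gives `∫‖u - Σ_k (b_k / c(k)) P_k‖² = ∫‖u - u^N‖² + Σ_k ‖b_k - u_k‖² / c(k)`.
Exactness of the quadrature on the products `P_k P_m` says that the square matrix
`V_{kj} = P_k(ξ_j)` satisfies `V W Vᵀ = diag c` with `W = diag w`; a one-sided inverse of a square
matrix is two-sided, so also `Vᵀ (diag c)⁻¹ V = W⁻¹`. The first identity makes the quadrature
reproduce the coefficients of `u^N`, so `u_k^{(N)} - u_k = Σ_j w_j P_k(ξ_j) (u - u^N)(ξ_j)`, and the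
second turns the aliasing term into `Σ_j w_j ‖(u - u^N)(ξ_j)‖² ≤ δ² Σ_j w_j = δ²`.
-/

open RealInnerProductSpace Finset Matrix

section OrthogonalExpansion

variable {α κ H : Type*} [Fintype κ] [NormedAddCommGroup H] [InnerProductSpace ℝ H]

noncomputable def expansion (c : κ → ℝ) (p : κ → α → ℝ) (y : κ → H) (x : α) : H :=
  ∑ k, ((c k)⁻¹ * p k x) • y k

variable {c : κ → ℝ} {p : κ → α → ℝ}

lemma expansion_sub (y z : κ → H) (x : α) :
    expansion c p (y - z) x = expansion c p y x - expansion c p z x := by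
  simp only [expansion, Pi.sub_apply, smul_sub, sum_sub_distrib]

variable [MeasurableSpace α] {μ : Measure α}

lemma memLp_expansion (hp : ∀ k, MemLp (p k) 2 μ) (y : κ → H) :
    MemLp (expansion c p y) 2 μ :=
  memLp_finsetSum _ fun k _ => (memLp_top_const (y k)).smul ((hp k).const_mul (c k)⁻¹)

lemma integrable_inner_of_memLp_two {f g : α → H} (hf : MemLp f 2 μ) (hg : MemLp g 2 μ) :
    Integrable (fun x => ⟪f x, g x⟫) μ :=
  (hf.norm.integrable_mul hg.norm).mono (hf.1.inner hg.1)
    (ae_of_all _ fun x => by simpa using abs_real_inner_le_norm (f x) (g x))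

lemma integrable_smul_of_memLp_two {φ : α → ℝ} {f : α → H} (hφ : MemLp φ 2 μ)
    (hf : MemLp f 2 μ) : Integrable (fun x => φ x • f x) μ :=
  memLp_one_iff_integrable.1 (hf.smul hφ)

variable [CompleteSpace H]

lemma integral_inner_expansion (hp : ∀ k, MemLp (p k) 2 μ) {f : α → H} (hf : MemLp f 2 μ)
    (y : κ → H) :
    ∫ x, ⟪f x, expansion c p y x⟫ ∂μ = ∑ k, (c k)⁻¹ * ⟪y k, ∫ x, p k x • f x ∂μ⟫ := by
  have hterm : ∀ k, Integrable (fun x => (c k)⁻¹ * ⟪y k, p k x • f x⟫) μ := fun k =>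
    ((integrable_smul_of_memLp_two (hp k) hf).const_inner (y k)).const_mul _
  calc ∫ x, ⟪f x, expansion c p y x⟫ ∂μ
      = ∫ x, ∑ k, (c k)⁻¹ * ⟪y k, p k x • f x⟫ ∂μ := by
        congr 1 with x
        simp only [expansion, inner_sum, real_inner_smul_right, real_inner_comm (f x)]
        exact sum_congr rfl fun k _ => by ring
    _ = ∑ k, (c k)⁻¹ * ⟪y k, ∫ x, p k x • f x ∂μ⟫ := by
        rw [integral_finsetSum _ fun k _ => hterm k]
        simp only [integral_const_mul, integral_inner (integrable_smul_of_memLp_two (hp _) hf)]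

variable [DecidableEq κ]

lemma integral_smul_expansion (hp : ∀ k, MemLp (p k) 2 μ)
    (hG : ∀ k m, ∫ x, p k x * p m x ∂μ = if k = m then c k else 0) (hc : ∀ k, c k ≠ 0)
    (y : κ → H) (k : κ) :
    ∫ x, p k x • expansion c p y x ∂μ = y k := by
  have hterm : ∀ m, Integrable (fun x => ((c m)⁻¹ * (p k x * p m x)) • y m) μ := fun m =>
    (((hp k).integrable_mul (hp m)).const_mul _).smul_const _
  calc ∫ x, p k x • expansion c p y x ∂μ
      = ∫ x, ∑ m, ((c m)⁻¹ * (p k x * p m x)) • y m ∂μ := by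
        congr 1 with x
        simp only [expansion, smul_sum, smul_smul]
        exact sum_congr rfl fun m _ => by ring_nf
    _ = ∑ m, ((c m)⁻¹ * ∫ x, p k x * p m x ∂μ) • y m := by
        rw [integral_finsetSum _ fun m _ => hterm m]
        simp only [integral_smul_const, integral_const_mul]
    _ = y k := by
        simp [hG, hc k]

lemma integral_norm_sq_expansion (hp : ∀ k, MemLp (p k) 2 μ)
    (hG : ∀ k m, ∫ x, p k x * p m x ∂μ = if k = m then c k else 0) (hc : ∀ k, c k ≠ 0)
    (y : κ → H) :
    ∫ x, ‖expansion c p y x‖ ^ 2 ∂μ = ∑ k, (c k)⁻¹ * ‖y k‖ ^ 2 := by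
  simp_rw [← real_inner_self_eq_norm_sq]
  rw [integral_inner_expansion hp (memLp_expansion hp y)]
  simp only [integral_smul_expansion hp hG hc]

lemma integral_norm_sq_sub_expansion (hp : ∀ k, MemLp (p k) 2 μ)
    (hG : ∀ k m, ∫ x, p k x * p m x ∂μ = if k = m then c k else 0) (hc : ∀ k, c k ≠ 0)
    {f : α → H} (hf : MemLp f 2 μ) (b : κ → H) :
    ∫ x, ‖f x - expansion c p b x‖ ^ 2 ∂μ =
      ∫ x, ‖f x - expansion c p (fun k => ∫ x, p k x • f x ∂μ) x‖ ^ 2 ∂μ +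
        ∑ k, (c k)⁻¹ * ‖b k - ∫ x, p k x • f x ∂μ‖ ^ 2 := by
  set a : κ → H := fun k => ∫ x, p k x • f x ∂μ
  set e : α → H := fun x => f x - expansion c p a x
  have he : MemLp e 2 μ := hf.sub (memLp_expansion hp a)
  have hS : MemLp (expansion c p (a - b)) 2 μ := memLp_expansion hp _
  have he_orth : ∀ k, ∫ x, p k x • e x ∂μ = 0 := fun k => by
    simp only [e, smul_sub]
    rw [integral_sub (integrable_smul_of_memLp_two (hp k) hf)
      (integrable_smul_of_memLp_two (hp k) (memLp_expansion hp a)),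
      integral_smul_expansion hp hG hc]
    exact sub_self _
  have hcross : ∫ x, ⟪e x, expansion c p (a - b) x⟫ ∂μ = 0 := by
    simp [integral_inner_expansion hp he, he_orth]
  have hdecomp : ∀ x, f x - expansion c p b x = e x + expansion c p (a - b) x := fun x => by
    simp only [e, expansion_sub]; abel
  have he2 := (memLp_two_iff_integrable_sq_norm he.1).1 he
  have hS2 := (memLp_two_iff_integrable_sq_norm hS.1).1 hS
  have hcross_int := (integrable_inner_of_memLp_two he hS).const_mul 2
  calc ∫ x, ‖f x - expansion c p b x‖ ^ 2 ∂μ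
      = ∫ x, ‖e x‖ ^ 2 + 2 * ⟪e x, expansion c p (a - b) x⟫
          + ‖expansion c p (a - b) x‖ ^ 2 ∂μ := by
        simp only [hdecomp, norm_add_sq_real]
    _ = ∫ x, ‖e x‖ ^ 2 ∂μ + ∑ k, (c k)⁻¹ * ‖b k - a k‖ ^ 2 := by
        have h12 : Integrable (fun x => ‖e x‖ ^ 2 + 2 * ⟪e x, expansion c p (a - b) x⟫) μ :=
          he2.add hcross_int
        rw [integral_add h12 hS2, integral_add he2 hcross_int,
          integral_const_mul, hcross, integral_norm_sq_expansion hp hG hc]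
        simp [norm_sub_rev]

end OrthogonalExpansion

section DiscreteOrthogonality

variable {ι κ H : Type*} [Fintype ι] [Fintype κ] [NormedAddCommGroup H] [InnerProductSpace ℝ H]

lemma sum_mul_norm_sq_sum_smul [DecidableEq ι] [DecidableEq κ] (M : Matrix κ ι ℝ)
    (a : κ → ℝ) (b : ι → ℝ) (h : Mᵀ * diagonal a * M = diagonal b) (x : ι → H) :
    ∑ k, a k * ‖∑ j, M k j • x j‖ ^ 2 = ∑ j, b j * ‖x j‖ ^ 2 := by
  have hentry : ∀ j j', ∑ k, M k j * a k * M k j' = if j = j' then b j else 0 := fun j j' => by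
    simpa [Matrix.mul_apply, diagonal_apply] using congr_fun (congr_fun h j) j'
  calc ∑ k, a k * ‖∑ j, M k j • x j‖ ^ 2
      = ∑ j, ∑ j', (∑ k, M k j * a k * M k j') * ⟪x j, x j'⟫ := by
        simp only [← real_inner_self_eq_norm_sq, sum_inner, inner_sum, real_inner_smul_left,
          real_inner_smul_right, mul_sum, sum_mul]
        rw [sum_comm]
        refine sum_congr rfl fun j _ => ?_
        rw [sum_comm]
        exact sum_congr rfl fun j' _ => sum_congr rfl fun k _ => by
          rw [real_inner_comm (x j')]
          ring
    _ = ∑ j, b j * ‖x j‖ ^ 2 := by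
        simp [hentry]

lemma Matrix.transpose_mul_diagonal_inv_mul_eq_diagonal {K : Type*} [Field K] [DecidableEq ι]
    (V : Matrix ι ι K) (w c : ι → K) (hc : ∀ i, c i ≠ 0) (h : V * diagonal w * Vᵀ = diagonal c) :
    (V * diagonal w)ᵀ * diagonal c⁻¹ * (V * diagonal w) = diagonal w := by
  have hright : V * diagonal w * (Vᵀ * diagonal c⁻¹) = 1 := by
    rw [← Matrix.mul_assoc, h, diagonal_mul_diagonal, ← diagonal_one]
    exact congr_arg diagonal (funext fun i => mul_inv_cancel₀ (hc i))
  rw [transpose_mul, diagonal_transpose, Matrix.mul_assoc, Matrix.mul_assoc,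
    ← Matrix.mul_assoc Vᵀ, mul_eq_one_comm.mp hright, Matrix.mul_one]

lemma sum_inv_mul_norm_sq_sum_smul [DecidableEq ι] (V : Matrix ι ι ℝ) (w c : ι → ℝ)
    (hc : ∀ i, c i ≠ 0) (h : V * diagonal w * Vᵀ = diagonal c) (x : ι → H) :
    ∑ k, (c k)⁻¹ * ‖∑ j, (w j * V k j) • x j‖ ^ 2 = ∑ j, w j * ‖x j‖ ^ 2 := by
  simpa [mul_comm] using sum_mul_norm_sq_sum_smul (V * diagonal w) c⁻¹ w
    (V.transpose_mul_diagonal_inv_mul_eq_diagonal w c hc h) x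

lemma sum_smul_expansion [DecidableEq κ] {α : Type*} {c : κ → ℝ} {p : κ → α → ℝ}
    {ξ : ι → α} {w : ι → ℝ}
    (hG : ∀ k m, ∑ j, w j * (p k (ξ j) * p m (ξ j)) = if k = m then c k else 0)
    (hc : ∀ k, c k ≠ 0) (y : κ → H) (k : κ) :
    ∑ j, (w j * p k (ξ j)) • expansion c p y (ξ j) = y k := by
  calc ∑ j, (w j * p k (ξ j)) • expansion c p y (ξ j)
      = ∑ m, ((c m)⁻¹ * ∑ j, w j * (p k (ξ j) * p m (ξ j))) • y m := by
        simp only [expansion, smul_sum, smul_smul, mul_sum, sum_smul]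
        rw [sum_comm]
        exact sum_congr rfl fun m _ => sum_congr rfl fun j _ => by ring_nf
    _ = y k := by
        simp [hG, hc k]

end DiscreteOrthogonality

section GaussQuadrature

open Polynomial

variable {n : ℕ} {H : Type*} [NormedAddCommGroup H] [InnerProductSpace ℝ H] [CompleteSpace H]

lemma truncExp_eq_expansion (μ : Measure ℝ) (P : Fin n → ℝ[X]) (u : ℝ → H) :
    truncExp μ P u = expansion (cCoeff μ P) (fun k x => (P k).eval x) (chaosCoeff μ P u) :=
  rfl

lemma memLp_two_eval {μ : Measure ℝ} (hint : ∀ p : ℝ[X], Integrable (fun x => p.eval x) μ)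
    (p : ℝ[X]) : MemLp (fun x => p.eval x) 2 μ := by
  rw [memLp_two_iff_integrable_sq p.continuous.aestronglyMeasurable]
  simpa only [eval_mul, sq] using hint (p * p)

lemma integral_eval_mul_eval_eq_ite {μ : Measure ℝ} {P : Fin n → ℝ[X]}
    (horth : ∀ k m, k ≠ m → ∫ x, (P k).eval x * (P m).eval x ∂μ = 0) (k m : Fin n) :
    ∫ x, (P k).eval x * (P m).eval x ∂μ = if k = m then cCoeff μ P k else 0 := by
  split_ifs with h
  · subst h
    simp only [cCoeff, sq]
  · exact horth k m h

lemma sum_mul_eval_mul_eval_eq_integral {N : ℕ} {μ : Measure ℝ} {P : Fin (N + 1) → ℝ[X]}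
    (hdeg : ∀ k, (P k).natDegree = k) {ξ w : Fin (N + 1) → ℝ}
    (hquad : ∀ h : ℝ[X], h.natDegree ≤ 2 * N + 1 →
      ∫ x, h.eval x ∂μ = ∑ j, w j * h.eval (ξ j)) (k m : Fin (N + 1)) :
    ∑ j, w j * ((P k).eval (ξ j) * (P m).eval (ξ j)) = ∫ x, (P k).eval x * (P m).eval x ∂μ := by
  have hd : (P k * P m).natDegree ≤ 2 * N + 1 :=
    natDegree_mul_le.trans (by rw [hdeg, hdeg]; omega)
  simpa using (hquad _ hd).symm

variable {μ : Measure ℝ} {P : Fin n → ℝ[X]} {ξ w : Fin n → ℝ}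

lemma quadCoeff_sub_chaosCoeff
    (hG : ∀ k m, ∑ j, w j * ((P k).eval (ξ j) * (P m).eval (ξ j)) =
      if k = m then cCoeff μ P k else 0)
    (hc : ∀ k, cCoeff μ P k ≠ 0) (u : ℝ → H) (k : Fin n) :
    quadCoeff P ξ w u k - chaosCoeff μ P u k =
      ∑ j, (w j * (P k).eval (ξ j)) • (u (ξ j) - truncExp μ P u (ξ j)) := by
  rw [← sum_smul_expansion (p := fun k x => (P k).eval x) hG hc (chaosCoeff μ P u) k,
    quadCoeff, ← sum_sub_distrib]
  simp only [smul_sub, truncExp_eq_expansion]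

lemma sum_inv_cCoeff_mul_norm_sq_quadCoeff_sub_chaosCoeff
    (hG : ∀ k m, ∑ j, w j * ((P k).eval (ξ j) * (P m).eval (ξ j)) =
      if k = m then cCoeff μ P k else 0)
    (hc : ∀ k, cCoeff μ P k ≠ 0) (u : ℝ → H) :
    ∑ k, (cCoeff μ P k)⁻¹ * ‖quadCoeff P ξ w u k - chaosCoeff μ P u k‖ ^ 2 =
      ∑ j, w j * ‖u (ξ j) - truncExp μ P u (ξ j)‖ ^ 2 := by
  have hV : of (fun k j => (P k).eval (ξ j)) * diagonal w * (of fun k j => (P k).eval (ξ j))ᵀ =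
      diagonal (cCoeff μ P) := by
    ext k m
    rw [diagonal_apply, ← hG, Matrix.mul_apply]
    simp only [mul_diagonal, transpose_apply, of_apply]
    exact sum_congr rfl fun j _ => by ring
  simp only [quadCoeff_sub_chaosCoeff hG hc]
  exact sum_inv_mul_norm_sq_sum_smul _ w _ hc hV _

end GaussQuadrature

theorem pseudoSpec_error_bound_general
    (μ : Measure ℝ) [IsProbabilityMeasure μ] (N : ℕ) (hN : 1 ≤ N)
    (P : Fin (N + 1) → Polynomial ℝ)
    (hdeg : ∀ k : Fin (N + 1), (P k).natDegree = (k : ℕ))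
    (hint : ∀ p : Polynomial ℝ, Integrable (fun x => p.eval x) μ)
    (horth : ∀ k m : Fin (N + 1), k ≠ m →
      ∫ x, (P k).eval x * (P m).eval x ∂μ = 0)
    (hpos : ∀ k : Fin (N + 1), 0 < cCoeff μ P k)
    (ξ : Fin (N + 1) → ℝ) (w : Fin (N + 1) → ℝ)
    (hw : ∀ j, 0 < w j)
    (hquad : ∀ h : Polynomial ℝ, h.natDegree ≤ 2 * N + 1 →
      ∫ x, h.eval x ∂μ = ∑ j : Fin (N + 1), w j * h.eval (ξ j))
    (H : Type u) [NormedAddCommGroup H] [InnerProductSpace ℝ H] [CompleteSpace H]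
    (u : ℝ → H) (hmeas : StronglyMeasurable u)
    (C : ℝ) (hbdd : ∀ x, ‖u x‖ ≤ C)
    (δ : ℝ)
    (happrox : ∀ j : Fin (N + 1), ‖u (ξ j) - truncExp μ P u (ξ j)‖ ≤ δ)
    (hae : ∀ᵐ x ∂μ, ‖u x - truncExp μ P u x‖ ≤ δ) :
    (∫ x, ‖u x - pseudoSpec μ P ξ w u x‖ ^ 2 ∂μ ≤
        (∫ x, ‖u x - truncExp μ P u x‖ ^ 2 ∂μ) + N * δ ^ 2) ∧
    ∫ x, ‖u x - pseudoSpec μ P ξ w u x‖ ^ 2 ∂μ ≤ (N + 1) * δ ^ 2 := by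
  have hc : ∀ k, cCoeff μ P k ≠ 0 := fun k => (hpos k).ne'
  have hG := integral_eval_mul_eval_eq_ite horth
  have hGquad : ∀ k m, ∑ j, w j * ((P k).eval (ξ j) * (P m).eval (ξ j)) =
      if k = m then cCoeff μ P k else 0 := fun k m => by
    rw [sum_mul_eval_mul_eval_eq_integral hdeg hquad, hG]
  have hsplit : ∫ x, ‖u x - pseudoSpec μ P ξ w u x‖ ^ 2 ∂μ =
      ∫ x, ‖u x - truncExp μ P u x‖ ^ 2 ∂μ +
        ∑ k, (cCoeff μ P k)⁻¹ * ‖quadCoeff P ξ w u k - chaosCoeff μ P u k‖ ^ 2 :=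
    integral_norm_sq_sub_expansion (fun k => memLp_two_eval hint (P k)) hG hc
      (MemLp.of_bound hmeas.aestronglyMeasurable C (ae_of_all _ hbdd)) _
  have hw_sum : ∑ j, w j = 1 := by simpa using (hquad 1 (by simp)).symm
  have hnodes : ∑ k, (cCoeff μ P k)⁻¹ * ‖quadCoeff P ξ w u k - chaosCoeff μ P u k‖ ^ 2 ≤
      δ ^ 2 := by
    rw [sum_inv_cCoeff_mul_norm_sq_quadCoeff_sub_chaosCoeff hGquad hc, ← one_mul (δ ^ 2),
      ← hw_sum, sum_mul]
    exact sum_le_sum fun j _ =>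
      mul_le_mul_of_nonneg_left (pow_le_pow_left₀ (norm_nonneg _) (happrox j) 2) (hw j).le
  have htrunc : ∫ x, ‖u x - truncExp μ P u x‖ ^ 2 ∂μ ≤ δ ^ 2 := by
    simpa using integral_mono_of_nonneg (ae_of_all _ fun x => by positivity)
      (integrable_const (δ ^ 2)) (hae.mono fun x hx => pow_le_pow_left₀ (norm_nonneg _) hx 2)
  have hδN : δ ^ 2 ≤ N * δ ^ 2 := le_mul_of_one_le_left (sq_nonneg δ) (by exact_mod_cast hN)
  exact ⟨by linarith, by linarith⟩

/-- `L²(μ)` error bound for the pseudo-spectral approximation: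
`∫‖u − u^{(N)}‖² dμ ≤ ∫‖u − u^N‖² dμ + N·δ²`, and in particular
`∫‖u − u^{(N)}‖² dμ ≤ (N+1)·δ²`. -/
theorem pseudoSpec_error_bound
    (μ : Measure ℝ) [IsProbabilityMeasure μ] (N : ℕ) (hN : 1 ≤ N)
    (P : Fin (N + 1) → Polynomial ℝ)
    (hdeg : ∀ k : Fin (N + 1), (P k).natDegree = (k : ℕ))
    (hint : ∀ p : Polynomial ℝ, Integrable (fun x => p.eval x) μ)
    (horth : ∀ k m : Fin (N + 1), k ≠ m →
      ∫ x, (P k).eval x * (P m).eval x ∂μ = 0)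
    (hpos : ∀ k : Fin (N + 1), 0 < cCoeff μ P k)
    (ξ : Fin (N + 1) → ℝ) (w : Fin (N + 1) → ℝ)
    (hw : ∀ j, 0 < w j)
    (hquad : ∀ h : Polynomial ℝ, h.natDegree ≤ 2 * N + 1 →
      ∫ x, h.eval x ∂μ = ∑ j : Fin (N + 1), w j * h.eval (ξ j))
    (H : Type u) [NormedAddCommGroup H] [InnerProductSpace ℝ H] [CompleteSpace H]
    (u : ℝ → H) (hmeas : StronglyMeasurable u)
    (C : ℝ) (hbdd : ∀ x, ‖u x‖ ≤ C)
    (δ : ℝ) (hδ : 0 ≤ δ)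
    (happrox : ∀ j : Fin (N + 1), ‖u (ξ j) - truncExp μ P u (ξ j)‖ ≤ δ)
    (hae : ∀ᵐ x ∂μ, ‖u x - truncExp μ P u x‖ ≤ δ) :
    (∫ x, ‖u x - pseudoSpec μ P ξ w u x‖ ^ 2 ∂μ ≤
        (∫ x, ‖u x - truncExp μ P u x‖ ^ 2 ∂μ) + N * δ ^ 2) ∧
    ∫ x, ‖u x - pseudoSpec μ P ξ w u x‖ ^ 2 ∂μ ≤ (N + 1) * δ ^ 2 :=
  pseudoSpec_error_bound_general μ N hN P hdeg hint horth hpos ξ w hw hquad H u hmeas C hbdd δ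
    happrox hae
end

section
/- For every natural number n, ∫_{−1}^{1} P_n(x)² dx = 2/(2n+1); equivalently, with respect to the uniform probability measure on [−1,1], the nth Legendre polynomial has squared L² norm (1/2)∫_{−1}^{1} P_n(x)² dx = 1/(2n+1). -/
/-!
Put `u = (X² - 1)ⁿ`. Since `u, u', …, u⁽ⁿ⁻¹⁾` vanish at `±1`, integrating by parts `n` times
gives `∫ (u⁽ⁿ⁾)² = (-1)ⁿ ∫ u · u⁽²ⁿ⁾ = (2n)! ∫ (1 - x²)ⁿ`. Differentiating `x (1 - x²)ⁿ⁺¹` shows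
that `Jₙ = ∫ (1 - x²)ⁿ` satisfies `(2n + 3) Jₙ₊₁ = (2n + 2) Jₙ`, so `Jₙ = 2²ⁿ⁺¹ (n!)² / (2n + 1)!`,
and dividing by the Rodrigues constant `(2ⁿ n!)²` leaves `2 / (2n + 1)`.
-/

open MeasureTheory

/-- The `n`-th Legendre polynomial, via the Rodrigues formula
`P_n(x) = (1/(2ⁿ n!)) (d/dx)ⁿ (x² − 1)ⁿ` (so that `P_n(1) = 1`). -/
noncomputable def legendreP (n : ℕ) : Polynomial ℝ :=
  Polynomial.C (1 / ((2 : ℝ) ^ n * n.factorial)) *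
    Polynomial.derivative^[n] ((Polynomial.X ^ 2 - 1) ^ n)

open Polynomial intervalIntegral
open scoped Nat

namespace Polynomial

theorem iterate_derivative_natDegree {R : Type*} [Semiring R] (p : R[X]) :
    derivative^[p.natDegree] p = C ((p.natDegree ! : R) * p.leadingCoeff) := by
  ext m
  rw [coeff_iterate_derivative, coeff_C]
  rcases m with _ | m
  · simp [Nat.descFactorial_self, nsmul_eq_mul]
  · simp [coeff_eq_zero_of_natDegree_lt (by omega : p.natDegree < m + 1 + p.natDegree)]

theorem iterate_derivative_X_sq_sub_one_pow_two_mul {R : Type*} [CommRing R] [Nontrivial R]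
    (n : ℕ) :
    derivative^[2 * n] ((X ^ 2 - 1) ^ n : R[X]) = C ((2 * n)! : R) := by
  have hmonic : (X ^ 2 - 1 : R[X]).Monic := by
    simpa using monic_X_pow_sub_C (1 : R) two_ne_zero
  have hdeg : ((X ^ 2 - 1) ^ n : R[X]).natDegree = 2 * n := by
    rw [hmonic.natDegree_pow, ← C_1, natDegree_X_pow_sub_C, mul_comm]
  rw [← hdeg, iterate_derivative_natDegree, (hmonic.pow n).leadingCoeff, mul_one]

theorem integral_eval_mul_derivative (p q : ℝ[X]) (a b : ℝ) :
    ∫ x in a..b, p.eval x * (derivative q).eval x =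
      p.eval b * q.eval b - p.eval a * q.eval a -
        ∫ x in a..b, (derivative p).eval x * q.eval x :=
  integral_mul_deriv_eq_deriv_mul (fun x _ => p.hasDerivAt x) (fun x _ => q.hasDerivAt x)
    ((derivative p).continuous.intervalIntegrable a b)
    ((derivative q).continuous.intervalIntegrable a b)

theorem integral_eval_mul_iterate_derivative {p q : ℝ[X]} {a b : ℝ} {k : ℕ}
    (hq : ∀ i < k, (derivative^[i] q).IsRoot a ∧ (derivative^[i] q).IsRoot b) :
    ∫ x in a..b, p.eval x * (derivative^[k] q).eval x =
      (-1) ^ k * ∫ x in a..b, (derivative^[k] p).eval x * q.eval x := by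
  induction k generalizing p with
  | zero => simp
  | succ k ih =>
    obtain ⟨ha, hb⟩ := hq k k.lt_succ_self
    rw [Function.iterate_succ_apply', integral_eval_mul_derivative, ha.eq_zero, hb.eq_zero,
      ih (fun i hi => hq i (by omega)), Function.iterate_succ_apply]
    ring

theorem isRoot_iterate_derivative_X_sq_sub_one_pow {R : Type*} [CommRing R] {n k : ℕ} (hk : k < n)
    {t : R} (ht : t ^ 2 = 1) : (derivative^[k] ((X ^ 2 - 1) ^ n : R[X])).IsRoot t := by
  have hdvd : X - C t ∣ (X ^ 2 - 1 : R[X]) := by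
    rw [dvd_iff_isRoot]
    simp [ht]
  have hdvd_k := pow_sub_dvd_iterate_derivative_of_pow_dvd k (pow_dvd_pow_of_dvd hdvd n)
  exact dvd_iff_isRoot.mp ((dvd_pow_self _ (by omega)).trans hdvd_k)

end Polynomial

theorem integral_one_sub_sq_pow_succ (n : ℕ) :
    (2 * n + 3 : ℝ) * ∫ x in (-1 : ℝ)..1, (1 - x ^ 2) ^ (n + 1) =
      (2 * n + 2 : ℝ) * ∫ x in (-1 : ℝ)..1, (1 - x ^ 2) ^ n := by
  have hderiv : ∀ x : ℝ, HasDerivAt (fun x => x * (1 - x ^ 2) ^ (n + 1))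
      ((2 * n + 3) * (1 - x ^ 2) ^ (n + 1) - (2 * n + 2) * (1 - x ^ 2) ^ n) x := by
    intro x
    refine ((hasDerivAt_id' x).mul (((hasDerivAt_pow 2 x).const_sub 1).pow (n + 1))).congr_deriv ?_
    simp only [Nat.add_sub_cancel, Pi.pow_apply]
    push_cast
    ring
  have hint := integral_eq_sub_of_hasDerivAt (a := -1) (b := 1) (fun x _ => hderiv x)
    (Continuous.intervalIntegrable (by fun_prop) _ _)
  rw [intervalIntegral.integral_sub (Continuous.intervalIntegrable (by fun_prop) _ _)
    (Continuous.intervalIntegrable (by fun_prop) _ _), intervalIntegral.integral_const_mul,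
    intervalIntegral.integral_const_mul] at hint
  norm_num at hint
  linarith

theorem integral_one_sub_sq_pow (n : ℕ) :
    (∫ x in (-1 : ℝ)..1, (1 - x ^ 2) ^ n) * (2 * n + 1)! = 2 ^ (2 * n + 1) * (n ! : ℝ) ^ 2 := by
  induction n with
  | zero => norm_num
  | succ n ih =>
    have hrec := integral_one_sub_sq_pow_succ n
    have hfac : ((2 * (n + 1) + 1)! : ℝ) = (2 * n + 3) * (2 * n + 2) * (2 * n + 1)! := by
      rw [show 2 * (n + 1) + 1 = 2 * n + 1 + 1 + 1 by ring, Nat.factorial_succ, Nat.factorial_succ]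
      push_cast
      ring
    rw [hfac, Nat.factorial_succ n]
    push_cast
    linear_combination (2 * (n : ℝ) + 2) ^ 2 * ih + (2 * n + 2) * (2 * n + 1)! * hrec

theorem integral_eval_iterate_derivative_X_sq_sub_one_pow_sq (n : ℕ) :
    ∫ x in (-1 : ℝ)..1, ((derivative^[n] ((X ^ 2 - 1) ^ n : ℝ[X])).eval x) ^ 2 =
      (2 * n)! * ∫ x in (-1 : ℝ)..1, (1 - x ^ 2) ^ n := by
  have hroots : ∀ i < n, (derivative^[i] ((X ^ 2 - 1) ^ n : ℝ[X])).IsRoot (-1) ∧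
      (derivative^[i] ((X ^ 2 - 1) ^ n : ℝ[X])).IsRoot 1 := fun i hi =>
    ⟨isRoot_iterate_derivative_X_sq_sub_one_pow hi (by norm_num),
      isRoot_iterate_derivative_X_sq_sub_one_pow hi (by norm_num)⟩
  simp only [sq (eval _ _)]
  rw [integral_eval_mul_iterate_derivative hroots, ← Function.iterate_add_apply, ← two_mul,
    iterate_derivative_X_sq_sub_one_pow_two_mul, ← intervalIntegral.integral_const_mul,
    ← intervalIntegral.integral_const_mul]
  refine intervalIntegral.integral_congr fun x _ => ?_
  simp only [eval_pow, eval_sub, eval_X, eval_one, eval_C]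
  rw [mul_left_comm, ← mul_pow, neg_one_mul, neg_sub]

theorem integral_legendreP_sq (n : ℕ) :
    ∫ x in (-1 : ℝ)..1, ((legendreP n).eval x) ^ 2 = 2 / (2 * n + 1) := by
  have hJ := integral_one_sub_sq_pow n
  simp only [legendreP, eval_mul, eval_C, mul_pow, intervalIntegral.integral_const_mul,
    integral_eval_iterate_derivative_X_sq_sub_one_pow_sq]
  rw [Nat.factorial_succ] at hJ
  field_simp
  push_cast at hJ
  linear_combination hJ

/-- Normalization of the Legendre polynomials:
`∫_{−1}^{1} P_n(x)² dx = 2/(2n+1)`; equivalently, with respect to the uniform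
probability measure on `[−1,1]`, the squared `L²` norm is `1/(2n+1)`. -/
theorem legendreP_sq_integral (n : ℕ) :
    (∫ x in Set.Icc (-1 : ℝ) 1, ((legendreP n).eval x) ^ 2) =
        2 / (2 * (n : ℝ) + 1) ∧
    (1 / 2) * ∫ x in Set.Icc (-1 : ℝ) 1, ((legendreP n).eval x) ^ 2 =
        1 / (2 * (n : ℝ) + 1) := by
  have hIcc : ∫ x in Set.Icc (-1 : ℝ) 1, ((legendreP n).eval x) ^ 2 = 2 / (2 * n + 1) := by
    rw [integral_Icc_eq_integral_Ioc, ← intervalIntegral.integral_of_le (by norm_num),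
      integral_legendreP_sq]
  refine ⟨hIcc, ?_⟩
  rw [hIcc]
  ring
end

section
/- For all natural numbers m and n, the probabilists' Hermite polynomials satisfy the linearization identity He_m(x) · He_n(x) = Σ_{k=0}^{min(m,n)} (m! n!)/((m−k)! (n−k)! k!) · He_{m+n−2k}(x), as an identity of polynomials with rational (in fact natural-number) coefficients: the coefficient of He_{m+n−2k} equals C(m,k)·C(n,k)·k!. -/
/-!
The operator `p ↦ X * p - p'` raises `He_j` to `He_{j+1}`, and since `He_{n+1}' = (n+1) He_n`
the product rule gives `He_{m+1} He_{n+1} = (X - d/dX)(He_m He_{n+1}) + (n+1) He_m He_n`.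
Induction on `m` therefore reduces the identity, over `ℤ`, to the Pascal-type recursion
`c(m+1, n+1, k+1) = c(m, n+1, k+1) + (n+1) c(m, n, k)` for `c(m, n, k) = C(m,k) C(n,k) k!`.
-/

open Finset Polynomial
open scoped Nat

namespace Polynomial

theorem derivative_hermite_succ (n : ℕ) :
    derivative (hermite (n + 1)) = (n + 1) • hermite n := by
  induction n with
  | zero => simp [hermite_zero]
  | succ n ih =>
    rw [hermite_succ (n + 1), derivative_sub, derivative_mul, ih, derivative_X, one_mul,
      derivative_smul, mul_smul_comm, add_sub_assoc, ← smul_sub, ← hermite_succ]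
    module

theorem X_mul_sub_derivative_sum_smul_hermite {ι : Type*} (s : Finset ι) (c j : ι → ℕ) :
    X * ∑ i ∈ s, c i • hermite (j i) - derivative (∑ i ∈ s, c i • hermite (j i)) =
      ∑ i ∈ s, c i • hermite (j i + 1) := by
  simp only [mul_sum, derivative_sum, derivative_smul, mul_smul_comm, ← sum_sub_distrib,
    ← smul_sub, hermite_succ]

theorem hermite_succ_mul_hermite_succ (m n : ℕ) :
    hermite (m + 1) * hermite (n + 1) =
      X * (hermite m * hermite (n + 1)) - derivative (hermite m * hermite (n + 1)) +
        (n + 1) • (hermite m * hermite n) := by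
  rw [hermite_succ m, derivative_mul, derivative_hermite_succ, mul_smul_comm]
  ring

def hermiteLinCoeff (m n k : ℕ) : ℕ := m.choose k * n.choose k * k !

theorem hermiteLinCoeff_zero_right (m n : ℕ) : hermiteLinCoeff m n 0 = 1 := by
  simp [hermiteLinCoeff]

theorem hermiteLinCoeff_of_lt_left {m n k : ℕ} (h : m < k) : hermiteLinCoeff m n k = 0 := by
  simp [hermiteLinCoeff, Nat.choose_eq_zero_of_lt h]

theorem hermiteLinCoeff_of_lt_right {m n k : ℕ} (h : n < k) : hermiteLinCoeff m n k = 0 := by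
  simp [hermiteLinCoeff, Nat.choose_eq_zero_of_lt h]

theorem hermiteLinCoeff_succ_succ_succ (m n k : ℕ) :
    hermiteLinCoeff (m + 1) (n + 1) (k + 1) =
      hermiteLinCoeff m (n + 1) (k + 1) + (n + 1) * hermiteLinCoeff m n k := by
  have h := Nat.add_one_mul_choose_eq n k
  simp only [hermiteLinCoeff, Nat.choose_succ_succ' m, Nat.factorial_succ]
  grind

theorem hermiteLinCoeff_eq_div {K : Type*} [Field K] [CharZero K] {m n k : ℕ} (hm : k ≤ m)
    (hn : k ≤ n) :
    (hermiteLinCoeff m n k : K) = m ! * n ! / ((m - k)! * ((n - k)! * k !)) := by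
  rw [hermiteLinCoeff, Nat.cast_mul, Nat.cast_mul, Nat.cast_choose K hm, Nat.cast_choose K hn]
  field_simp

theorem hermite_mul_hermite (m n : ℕ) :
    hermite m * hermite n =
      ∑ k ∈ range (m + 1), hermiteLinCoeff m n k • hermite (m + n - 2 * k) := by
  induction m generalizing n with
  | zero => simp [hermite_zero, hermiteLinCoeff]
  | succ m ih =>
    cases n with
    | zero =>
      simp [sum_range_succ', hermite_zero, hermiteLinCoeff_zero_right,
        hermiteLinCoeff_of_lt_right]
    | succ n =>
      have hraise : ∑ k ∈ range (m + 1), hermiteLinCoeff m (n + 1) k •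
            hermite (m + (n + 1) - 2 * k + 1) =
          ∑ k ∈ range (m + 2), hermiteLinCoeff m (n + 1) k •
            hermite (m + 1 + (n + 1) - 2 * k) := by
        rw [sum_range_succ _ (m + 1), hermiteLinCoeff_of_lt_left (lt_add_one m), zero_smul,
          add_zero]
        -- the index `m + (n + 1) - 2 * k` truncates only where the coefficient vanishes
        refine sum_congr rfl fun k hk => ?_
        rcases le_or_gt k (n + 1) with hkn | hkn
        · rw [mem_range] at hk
          congr 2
          omega
        · rw [hermiteLinCoeff_of_lt_right hkn, zero_smul, zero_smul]
      have hidx : ∀ k, m + 1 + (n + 1) - 2 * (k + 1) = m + n - 2 * k := by omega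
      rw [hermite_succ_mul_hermite_succ, ih, ih, X_mul_sub_derivative_sum_smul_hermite, hraise,
        smul_sum, sum_range_succ', sum_range_succ' _ (m + 1)]
      simp only [hermiteLinCoeff_succ_succ_succ, hermiteLinCoeff_zero_right, add_smul, mul_smul,
        sum_add_distrib, hidx]
      abel

end Polynomial

/-- Linearization identity for products of probabilists' Hermite polynomials:
`He_m · He_n = Σ_{k=0}^{min(m,n)} (m! n!)/((m−k)! (n−k)! k!) · He_{m+n−2k}`,
with the coefficient of `He_{m+n−2k}` equal to `C(m,k)·C(n,k)·k!`. -/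
theorem hermite_mul_linearization (m n : ℕ) :
    ((Polynomial.hermite m).map (Int.castRingHom ℚ)) *
        ((Polynomial.hermite n).map (Int.castRingHom ℚ)) =
      ∑ k ∈ Finset.range (min m n + 1),
        Polynomial.C
            ((m.factorial * n.factorial : ℚ) /
              ((m - k).factorial * ((n - k).factorial * k.factorial))) *
          ((Polynomial.hermite (m + n - 2 * k)).map (Int.castRingHom ℚ)) ∧
    ∀ k ≤ min m n,
      (m.factorial * n.factorial : ℚ) /
          ((m - k).factorial * ((n - k).factorial * k.factorial)) =
        ((m.choose k * n.choose k * k.factorial : ℕ) : ℚ) := by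
  have hcoeff : ∀ k ≤ min m n,
      (m.factorial * n.factorial : ℚ) / ((m - k).factorial * ((n - k).factorial * k.factorial)) =
        hermiteLinCoeff m n k :=
    fun k hk => (hermiteLinCoeff_eq_div (le_min_iff.mp hk).1 (le_min_iff.mp hk).2).symm
  refine ⟨?_, hcoeff⟩
  have hvanish : ∀ k ∈ range (m + 1), k ∉ range (min m n + 1) →
      (hermiteLinCoeff m n k • hermite (m + n - 2 * k)).map (Int.castRingHom ℚ) = 0 := by
    intro k hkm hk
    rw [mem_range] at hkm hk
    rw [hermiteLinCoeff_of_lt_right (by omega), zero_smul, Polynomial.map_zero]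
  rw [← Polynomial.map_mul, hermite_mul_hermite, Polynomial.map_sum,
    ← sum_subset (range_subset_range.mpr (by omega)) hvanish]
  refine sum_congr rfl fun k hk => ?_
  rw [hcoeff k (mem_range_succ_iff.mp hk), nsmul_eq_mul, Polynomial.map_mul,
    Polynomial.map_natCast, ← C_eq_natCast]
end
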